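/- Let q ⊆ Q be prime ideals of B and set D_e = D_Q ∩ D_q. For roots β, β' of f in M, the pairs (φ_β⁻¹(Q), φ_β⁻¹(q)) and (φ_{β'}⁻¹(Q), φ_{β'}⁻¹(q)) of prime ideals of C are equal if and only if β and β' lie in the same D_Q-orbit and in the same D_q-orbit of the set of roots of f in M. -/

import Mathlib

/-!
Both sides split into one condition per prime, so fix a prime `P` of `B`. Every `L`-embedding
`L' → M` extends to an automorphism of the normal extension `M/L`, so `φ_{β'} = τ ∘ φ_β` for
some `τ ∈ Gal(M/L)`, and the condition `φ_β⁻¹(P) = φ_{β'}⁻¹(P)` says that `P` and `τ⁻¹(P)` lie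
over the same prime of `C`, embedded in `B` by `φ_β`. The invariants of `B` under
`H = Gal(M/φ_β(L'))` are exactly `φ_β(C)`, so `H` acts transitively on the primes of `B` over a
given prime of `C`: some `ρ ∈ H` maps `P` to `τ⁻¹(P)`, and then `σ = τρ` stabilises `P` and
sends `β` to `β'`.
-/

/-- The restriction of an algebra homomorphism `ψ : L' →ₐ[L] M` to a map between the
integral closures of `A` in `L'` and in `M`. -/
noncomputable def restrictToIntegralClosure (A : Type*) {L L' M : Type*}
    [CommRing A] [Field L] [Field L'] [Field M]
    [Algebra A L] [Algebra A L'] [Algebra A M]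
    [Algebra L L'] [Algebra L M]
    [IsScalarTower A L L'] [IsScalarTower A L M]
    (ψ : L' →ₐ[L] M) : integralClosure A L' →ₐ[A] integralClosure A M :=
  AlgHom.codRestrict ((ψ.restrictScalars A).comp (integralClosure A L').val)
    (integralClosure A M)
    (fun x => x.2.map ((ψ.restrictScalars A)))

open IntermediateField

theorem AlgHom.exists_algEquiv_comp_eq {L L' M : Type*} [Field L] [Field L'] [Field M]
    [Algebra L L'] [Algebra L M] [Normal L M] (ψ₁ ψ₂ : L' →ₐ[L] M) :
    ∃ τ : M ≃ₐ[L] M, (τ : M →ₐ[L] M).comp ψ₁ = ψ₂ := by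
  let : Algebra L' M := ψ₁.toRingHom.toAlgebra
  have : IsScalarTower L L' M := .of_algebraMap_eq fun x => (ψ₁.commutes x).symm
  refine ⟨AlgEquiv.ofBijective (ψ₂.liftNormal M) (AlgHom.normal_bijective L M M _), ?_⟩
  ext x
  exact ψ₂.liftNormal_commutes M x

theorem AlgHom.ext_of_adjoin_simple_eq_top {L L' M : Type*} [Field L] [Field L'] [Field M]
    [Algebra L L'] [Algebra L M] {α : L'} (hα : adjoin L ({α} : Set L') = ⊤)
    {ψ₁ ψ₂ : L' →ₐ[L] M} (h : ψ₁ α = ψ₂ α) : ψ₁ = ψ₂ := by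
  ext x
  have hx : x ∈ adjoin L ({α} : Set L') := hα ▸ mem_top
  induction hx using adjoin_induction with
  | mem y hy => rwa [Set.mem_singleton_iff.mp hy]
  | algebraMap r => simp only [AlgHom.commutes]
  | add a b _ _ ha hb => simp only [map_add, ha, hb]
  | inv a _ ha => simp only [map_inv₀, ha]
  | mul a b _ _ ha hb => simp only [map_mul, ha, hb]

theorem Ideal.map_algEquiv_mul {R S : Type*} [CommSemiring R] [Semiring S] [Algebra R S]
    (σ τ : S ≃ₐ[R] S) (P : Ideal S) : P.map (σ * τ) = (P.map τ).map σ := by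
  rw [← Ideal.map_coe τ, ← Ideal.map_coe σ, Ideal.map_map]
  rfl

section

variable {A L L' M : Type*} [CommRing A] [Field L] [Field L'] [Field M]
  [Algebra A L] [Algebra L L'] [Algebra L M] [Algebra A L'] [Algebra A M]
  [IsScalarTower A L L'] [IsScalarTower A L M]

theorem exists_restrictToIntegralClosure_eq_of_fixed [FiniteDimensional L M] [IsGalois L M]
    (ψ : L' →ₐ[L] M) (b : integralClosure A M)
    (hb : ∀ σ ∈ ψ.fieldRange.fixingSubgroup, σ (b : M) = b) :
    ∃ c, restrictToIntegralClosure A ψ c = b := by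
  have hb' : (b : M) ∈ ψ.fieldRange := by
    rw [← IsGalois.fixedField_fixingSubgroup ψ.fieldRange]
    exact fun σ => hb σ σ.2
  obtain ⟨z, hz⟩ := hb'
  have hz_int : IsIntegral A z := by
    rw [← isIntegral_algHom_iff (ψ.restrictScalars A) ψ.injective]
    exact hz ▸ b.2
  exact ⟨⟨z, hz_int⟩, Subtype.ext hz⟩

variable [IsFractionRing A L] [FiniteDimensional L M]

theorem galRestrict_restrictToIntegralClosure (σ : M ≃ₐ[L] M) (ψ : L' →ₐ[L] M)
    (c : integralClosure A L') :
    galRestrict A L M (integralClosure A M) σ (restrictToIntegralClosure A ψ c)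
      = restrictToIntegralClosure A ((σ : M →ₐ[L] M).comp ψ) c :=
  Subtype.ext (algebraMap_galRestrict_apply A σ (restrictToIntegralClosure A ψ c))

theorem comap_restrictToIntegralClosure_algEquiv_comp (σ : M ≃ₐ[L] M) (ψ : L' →ₐ[L] M)
    (P : Ideal (integralClosure A M)) :
    P.comap (restrictToIntegralClosure A ((σ : M →ₐ[L] M).comp ψ))
      = (P.comap (galRestrict A L M (integralClosure A M) σ)).comap
          (restrictToIntegralClosure A ψ) := by
  ext c
  simp only [Ideal.mem_comap, galRestrict_restrictToIntegralClosure]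

theorem exists_map_galRestrict_eq_of_comap_eq [IsGalois L M] (ψ : L' →ₐ[L] M)
    (P P' : Ideal (integralClosure A M)) [P.IsPrime] [P'.IsPrime]
    (h : P.comap (restrictToIntegralClosure A ψ) = P'.comap (restrictToIntegralClosure A ψ)) :
    ∃ σ ∈ ψ.fieldRange.fixingSubgroup, P.map (galRestrict A L M (integralClosure A M) σ) = P' := by
  let B := integralClosure A M
  let C := integralClosure A L'
  let : Algebra C B := (restrictToIntegralClosure A ψ).toRingHom.toAlgebra
  let : MulSemiringAction (M ≃ₐ[L] M) B :=
    MulSemiringAction.compHom B (galRestrict A L M B).toMonoidHom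
  let H := ψ.fieldRange.fixingSubgroup
  have coe_smul (σ : M ≃ₐ[L] M) (b : B) : ((σ • b : B) : M) = σ b :=
    algebraMap_galRestrict_apply A σ b
  have smul_algebraMap (σ : H) (c : C) : σ • algebraMap C B c = algebraMap C B c :=
    Subtype.ext ((coe_smul σ _).trans (σ.2 ⟨_, c, rfl⟩))
  have : SMulCommClass H C B := ⟨fun σ c b => by
    rw [Algebra.smul_def, Algebra.smul_def, smul_mul', smul_algebraMap]⟩
  have : Algebra.IsInvariant C B H := ⟨fun b hb =>
    exists_restrictToIntegralClosure_eq_of_fixed ψ b fun σ hσ =>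
      (coe_smul σ b).symm.trans (congrArg Subtype.val (hb ⟨σ, hσ⟩))⟩
  obtain ⟨⟨σ, hσ⟩, hσP⟩ := Algebra.IsInvariant.exists_smul_of_under_eq C B H P P' h
  exact ⟨σ, hσ, hσP.symm⟩

theorem comap_restrictToIntegralClosure_eq_iff [IsGalois L M] (ψ₁ ψ₂ : L' →ₐ[L] M)
    (P : Ideal (integralClosure A M)) [P.IsPrime] :
    P.comap (restrictToIntegralClosure A ψ₁) = P.comap (restrictToIntegralClosure A ψ₂) ↔
      ∃ σ : M ≃ₐ[L] M, P.map (galRestrict A L M (integralClosure A M) σ) = P ∧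
        (σ : M →ₐ[L] M).comp ψ₁ = ψ₂ := by
  set e := galRestrict A L M (integralClosure A M)
  constructor
  · intro h
    obtain ⟨τ, rfl⟩ := ψ₁.exists_algEquiv_comp_eq ψ₂
    rw [comap_restrictToIntegralClosure_algEquiv_comp] at h
    obtain ⟨ρ, hρ, hρP⟩ := exists_map_galRestrict_eq_of_comap_eq ψ₁ P _ h
    refine ⟨τ * ρ, ?_, AlgHom.ext fun x => congrArg τ (hρ ⟨ψ₁ x, x, rfl⟩)⟩
    rw [map_mul, Ideal.map_algEquiv_mul, hρP]
    exact Ideal.map_comap_of_surjective _ (e τ).surjective P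
  · rintro ⟨σ, hσP, rfl⟩
    rw [comap_restrictToIntegralClosure_algEquiv_comp]
    conv_rhs => rw [← hσP]
    rw [Ideal.comap_map_of_bijective _ (e σ).bijective]

end

theorem prime_pairs_eq_iff_same_orbits_general
    {A L L' M : Type*} [CommRing A]
    [Field L] [Field L'] [Field M]
    [Algebra A L] [IsFractionRing A L]
    [Algebra L L'] [Algebra L M]
    [Algebra A L'] [Algebra A M]
    [IsScalarTower A L L'] [IsScalarTower A L M]
    [IsGalois L M] [FiniteDimensional L M]
    (f : Polynomial L)
    (α' : L')
    (hgen : IntermediateField.adjoin L ({α'} : Set L') = ⊤)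
    (φ : ∀ β : M, Polynomial.aeval β f = 0 → (L' →ₐ[L] M))
    (hφ : ∀ (β : M) (hβ : Polynomial.aeval β f = 0), φ β hβ α' = β)
    (Q q : Ideal (integralClosure A M)) [Q.IsPrime] [q.IsPrime]
    (β β' : M) (hβ : Polynomial.aeval β f = 0) (hβ' : Polynomial.aeval β' f = 0) :
    (Ideal.comap (restrictToIntegralClosure A (φ β hβ)) Q
        = Ideal.comap (restrictToIntegralClosure A (φ β' hβ')) Q ∧
      Ideal.comap (restrictToIntegralClosure A (φ β hβ)) q
        = Ideal.comap (restrictToIntegralClosure A (φ β' hβ')) q) ↔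
    ((∃ σ : M ≃ₐ[L] M,
        Ideal.map (galRestrict A L M (integralClosure A M) σ) Q = Q ∧ σ β = β') ∧
      (∃ τ : M ≃ₐ[L] M,
        Ideal.map (galRestrict A L M (integralClosure A M) τ) q = q ∧ τ β = β')) := by
  have comp_eq_iff (σ : M ≃ₐ[L] M) : (σ : M →ₐ[L] M).comp (φ β hβ) = φ β' hβ' ↔ σ β = β' :=
    ⟨fun h => by rw [← hφ β hβ, ← hφ β' hβ']; exact DFunLike.congr_fun h α',
      fun h => AlgHom.ext_of_adjoin_simple_eq_top hgen (by rw [AlgHom.comp_apply, hφ, hφ]; exact h)⟩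
  simp only [comap_restrictToIntegralClosure_eq_iff, comp_eq_iff]

/-- In the AKLB setup with `f`, `α'`, `L'`, `C = integralClosure A L'` and the
embeddings `φ β` as in Statement 3: let `q ⊆ Q` be primes of `B = integralClosure A M` and set
`D_e = D_Q ∩ D_q`. For roots `β, β'` of `f` in `M`, the pairs `((φ_β)⁻¹(Q), (φ_β)⁻¹(q))` and
`((φ_{β'})⁻¹(Q), (φ_{β'})⁻¹(q))` of primes of `C` are equal if and only if `β` and `β'` lie in
the same `D_Q`-orbit and in the same `D_q`-orbit of the set of roots of `f` in `M`. -/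
theorem prime_pairs_eq_iff_same_orbits
    {A L L' M : Type*} [CommRing A] [IsDomain A] [IsIntegrallyClosed A] [IsNoetherianRing A]
    [Field L] [Field L'] [Field M]
    [Algebra A L] [IsFractionRing A L]
    [Algebra L L'] [Algebra L M] [Algebra L' M]
    [Algebra A L'] [Algebra A M]
    [IsScalarTower A L L'] [IsScalarTower A L M] [IsScalarTower L L' M]
    [IsGalois L M] [FiniteDimensional L M]
    (f : Polynomial L) (hirr : Irreducible f) (hsep : f.Separable)
    (hsplit : (f.map (algebraMap L M)).Splits)
    (α' : L') (hα' : Polynomial.aeval α' f = 0)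
    (hgen : IntermediateField.adjoin L ({α'} : Set L') = ⊤)
    (φ : ∀ β : M, Polynomial.aeval β f = 0 → (L' →ₐ[L] M))
    (hφ : ∀ (β : M) (hβ : Polynomial.aeval β f = 0), φ β hβ α' = β)
    (Q q : Ideal (integralClosure A M)) [Q.IsPrime] [q.IsPrime] (hqQ : q ≤ Q)
    (β β' : M) (hβ : Polynomial.aeval β f = 0) (hβ' : Polynomial.aeval β' f = 0) :
    (Ideal.comap (restrictToIntegralClosure A (φ β hβ)) Q
        = Ideal.comap (restrictToIntegralClosure A (φ β' hβ')) Q ∧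
      Ideal.comap (restrictToIntegralClosure A (φ β hβ)) q
        = Ideal.comap (restrictToIntegralClosure A (φ β' hβ')) q) ↔
    ((∃ σ : M ≃ₐ[L] M,
        Ideal.map (galRestrict A L M (integralClosure A M) σ) Q = Q ∧ σ β = β') ∧
      (∃ τ : M ≃ₐ[L] M,
        Ideal.map (galRestrict A L M (integralClosure A M) τ) q = q ∧ τ β = β')) :=
  prime_pairs_eq_iff_same_orbits_general f α' hgen φ hφ Q q β β' hβ hβ'
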